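/- arXiv:0712.4142 — 7 statements merged into one kernel-verified Lean document; each statement's English description precedes it below -/
import Mathlib

section
/- Let G be a group and H, I subgroups with G = HI. If A and B are subgroups of G containing H, with A = HC and B = HD for subgroups C, D of I, then A ∩ B = H(C ∩ D). -/
open Pointwise

/-- If `G = HI`, `H ≤ A`, `H ≤ B`, and `C = A ∩ I`, `D = B ∩ I`, then
`A ∩ B = H(C ∩ D)`. -/
theorem stmt2 {G : Type*} [Group G] (H I A B : Subgroup G)
    (hHI : (H : Set G) * (I : Set G) = Set.univ) (hA : H ≤ A) (hB : H ≤ B) :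
    ((A ⊓ B : Subgroup G) : Set G)
      = (H : Set G) * (((A ⊓ I) ⊓ (B ⊓ I) : Subgroup G) : Set G) := by
  ext x
  constructor
  · rintro ⟨hxA, hxB⟩
    have : x ∈ (H : Set G) * (I : Set G) := by rw [hHI]; trivial
    obtain ⟨h, hh, i, hi, rfl⟩ := this
    refine ⟨h, hh, i, ?_, rfl⟩
    have hiA : i ∈ A := by
      have := A.mul_mem (A.inv_mem (hA hh)) hxA
      simpa using this
    have hiB : i ∈ B := by
      have := B.mul_mem (B.inv_mem (hB hh)) hxB
      simpa using this
    exact ⟨⟨hiA, hi⟩, hiB, hi⟩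
  · rintro ⟨h, hh, i, ⟨⟨hiA, _⟩, hiB, _⟩, rfl⟩
    exact ⟨A.mul_mem (hA hh) hiA, B.mul_mem (hB hh) hiB⟩
end

section
/- Let G be a group, H and I subgroups with G = HI, and suppose any two subgroups of I permute (I₁I₂ = I₂I₁ for all I₁, I₂ ≤ I). If A and B are subgroups of G containing H, then the subgroup generated by A and B equals H·⟨A∩I, B∩I⟩, i.e., the image of the map W ↦ W ∩ I is closed under joins. -/
open Pointwise

/-- If two subgroups permute, their join's carrier is the set product. -/
lemma coe_sup_of_mul_comm {G : Type*} [Group G] (X Y : Subgroup G)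
    (h : (X : Set G) * (Y : Set G) = (Y : Set G) * (X : Set G)) :
    ((X ⊔ Y : Subgroup G) : Set G) = (X : Set G) * (Y : Set G) := by
  have hmul : ∀ a b : G, a ∈ (X : Set G) * (Y : Set G) → b ∈ (X : Set G) * (Y : Set G) →
      a * b ∈ (X : Set G) * (Y : Set G) := by
    rintro a b ⟨x₁, hx₁, y₁, hy₁, rfl⟩ ⟨x₂, hx₂, y₂, hy₂, rfl⟩
    have hc : y₁ * x₂ ∈ (Y : Set G) * (X : Set G) := ⟨y₁, hy₁, x₂, hx₂, rfl⟩
    rw [← h] at hc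
    obtain ⟨x₃, hx₃, y₃, hy₃, hxy⟩ := hc
    replace hxy : x₃ * y₃ = y₁ * x₂ := hxy
    refine ⟨x₁ * x₃, mul_mem hx₁ hx₃, y₃ * y₂, mul_mem hy₃ hy₂, ?_⟩
    show x₁ * x₃ * (y₃ * y₂) = x₁ * y₁ * (x₂ * y₂)
    rw [← mul_assoc, mul_assoc x₁, hxy]; group
  let K : Subgroup G :=
    { carrier := (X : Set G) * (Y : Set G)
      one_mem' := ⟨1, one_mem X, 1, one_mem Y, one_mul 1⟩
      mul_mem' := fun ha hb => hmul _ _ ha hb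
      inv_mem' := by
        rintro a ⟨x, hx, y, hy, rfl⟩
        show (x * y)⁻¹ ∈ (X : Set G) * (Y : Set G)
        have hc : y⁻¹ * x⁻¹ ∈ (Y : Set G) * (X : Set G) := ⟨y⁻¹, inv_mem hy, x⁻¹, inv_mem hx, rfl⟩
        rw [← h] at hc
        simpa [mul_inv_rev] using hc }
  apply le_antisymm
  · have hle : X ⊔ Y ≤ K := by
      apply sup_le
      · intro x hx; exact ⟨x, hx, 1, one_mem Y, mul_one x⟩
      · intro y hy; exact ⟨1, one_mem X, y, hy, one_mul y⟩
    exact hle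
  · rintro a ⟨x, hx, y, hy, rfl⟩
    exact mul_mem (SetLike.le_def.mp le_sup_left hx) (SetLike.le_def.mp le_sup_right hy)

/-- If `G = HI` with `I` finite quasi-Hamiltonian, and `H ≤ A`, `H ≤ B`, then
`⟨A, B⟩ = H·⟨A∩I, B∩I⟩`: the image of `W ↦ W ∩ I` is closed under joins. -/
theorem stmt3 {G : Type*} [Group G] (H I : Subgroup G) [Finite I]
    (hHI : (H : Set G) * (I : Set G) = Set.univ)
    (hperm : ∀ I₁ I₂ : Subgroup G, I₁ ≤ I → I₂ ≤ I →
      (I₁ : Set G) * (I₂ : Set G) = (I₂ : Set G) * (I₁ : Set G))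
    (A B : Subgroup G) (hA : H ≤ A) (hB : H ≤ B) :
    ((A ⊔ B : Subgroup G) : Set G)
      = (H : Set G) * (((A ⊓ I) ⊔ (B ⊓ I) : Subgroup G) : Set G) := by
  have hdecomp : ∀ (C : Subgroup G), H ≤ C →
      (C : Set G) = (H : Set G) * ((C ⊓ I : Subgroup G) : Set G) := by
    intro C hC
    ext a
    constructor
    · intro ha
      have : a ∈ (H : Set G) * (I : Set G) := by rw [hHI]; trivial
      obtain ⟨h, hh, i, hi, he⟩ := this
      replace he : h * i = a := he
      subst he
      exact ⟨h, hh, i, Subgroup.mem_inf.mpr ⟨(mul_mem_cancel_left (hC hh)).mp ha, hi⟩, rfl⟩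
    · rintro ⟨h, hh, c, hc, he⟩
      replace he : h * c = a := he
      subst he
      exact mul_mem (hC hh) (Subgroup.mem_inf.mp hc).1
  have hAeq := hdecomp A hA
  have hBeq := hdecomp B hB
  have hXH : ((A ⊓ I : Subgroup G) : Set G) * (H : Set G)
      ⊆ (H : Set G) * ((A ⊓ I : Subgroup G) : Set G) := by
    rw [← hAeq]
    rintro a ⟨x, hx, h, hh, he⟩
    replace he : x * h = a := he
    subst he
    exact mul_mem (Subgroup.mem_inf.mp hx).1 (hA hh)
  have hYH : ((B ⊓ I : Subgroup G) : Set G) * (H : Set G)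
      ⊆ (H : Set G) * ((B ⊓ I : Subgroup G) : Set G) := by
    rw [← hBeq]
    rintro a ⟨y, hy, h, hh, he⟩
    replace he : y * h = a := he
    subst he
    exact mul_mem (Subgroup.mem_inf.mp hy).1 (hB hh)
  have hXY : ((A ⊓ I : Subgroup G) : Set G) * ((B ⊓ I : Subgroup G) : Set G)
      = ((B ⊓ I : Subgroup G) : Set G) * ((A ⊓ I : Subgroup G) : Set G) :=
    hperm _ _ inf_le_right inf_le_right
  rw [coe_sup_of_mul_comm _ _ hXY]
  set X := A ⊓ I with hXdef
  set Y := B ⊓ I with hYdef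
  have hmem : ∀ a : G, a ∈ (H : Set G) * ((X : Set G) * (Y : Set G)) ↔
      ∃ h ∈ H, ∃ x ∈ X, ∃ y ∈ Y, h * x * y = a := by
    intro a
    constructor
    · rintro ⟨h, hh, w, ⟨x, hx, y, hy, he1⟩, he2⟩
      replace he1 : x * y = w := he1
      replace he2 : h * w = a := he2
      exact ⟨h, hh, x, hx, y, hy, by rw [← he2, ← he1]; group⟩
    · rintro ⟨h, hh, x, hx, y, hy, rfl⟩
      exact ⟨h, hh, x * y, ⟨x, hx, y, hy, rfl⟩, (mul_assoc h x y).symm⟩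
  let K : Subgroup G :=
    { carrier := (H : Set G) * ((X : Set G) * (Y : Set G))
      one_mem' := (hmem 1).mpr ⟨1, one_mem H, 1, one_mem X, 1, one_mem Y, by group⟩
      mul_mem' := by
        intro a b ha hb
        obtain ⟨h₁, hh₁, x₁, hx₁, y₁, hy₁, rfl⟩ := (hmem a).mp ha
        obtain ⟨h₂, hh₂, x₂, hx₂, y₂, hy₂, rfl⟩ := (hmem b).mp hb
        obtain ⟨h₃, hh₃, y₃, hy₃, e₁⟩ := hYH ⟨y₁, hy₁, h₂, hh₂, rfl⟩
        replace e₁ : h₃ * y₃ = y₁ * h₂ := e₁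
        obtain ⟨h₄, hh₄, x₄, hx₄, e₂⟩ := hXH ⟨x₁, hx₁, h₃, hh₃, rfl⟩
        replace e₂ : h₄ * x₄ = x₁ * h₃ := e₂
        have hc : y₃ * x₂ ∈ (Y : Set G) * (X : Set G) := ⟨y₃, hy₃, x₂, hx₂, rfl⟩
        rw [← hXY] at hc
        obtain ⟨x₅, hx₅, y₅, hy₅, e₃⟩ := hc
        replace e₃ : x₅ * y₅ = y₃ * x₂ := e₃
        refine (hmem _).mpr ⟨h₁ * h₄, mul_mem hh₁ hh₄, x₄ * x₅, mul_mem hx₄ hx₅,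
          y₅ * y₂, mul_mem hy₅ hy₂, ?_⟩
        calc h₁ * h₄ * (x₄ * x₅) * (y₅ * y₂)
            = h₁ * (h₄ * x₄) * (x₅ * y₅) * y₂ := by group
          _ = h₁ * (x₁ * h₃) * (y₃ * x₂) * y₂ := by rw [e₂, e₃]
          _ = h₁ * x₁ * (h₃ * y₃) * x₂ * y₂ := by group
          _ = h₁ * x₁ * (y₁ * h₂) * x₂ * y₂ := by rw [e₁]
          _ = h₁ * x₁ * y₁ * (h₂ * x₂ * y₂) := by group
      inv_mem' := by
        intro a ha
        obtain ⟨h₁, hh₁, x₁, hx₁, y₁, hy₁, rfl⟩ := (hmem a).mp ha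
        obtain ⟨h₂, hh₂, x₂, hx₂, e₁⟩ := hXH ⟨x₁⁻¹, inv_mem hx₁, h₁⁻¹, inv_mem hh₁, rfl⟩
        replace e₁ : h₂ * x₂ = x₁⁻¹ * h₁⁻¹ := e₁
        obtain ⟨h₃, hh₃, y₃, hy₃, e₂⟩ := hYH ⟨y₁⁻¹, inv_mem hy₁, h₂, hh₂, rfl⟩
        replace e₂ : h₃ * y₃ = y₁⁻¹ * h₂ := e₂
        have hc : y₃ * x₂ ∈ (Y : Set G) * (X : Set G) := ⟨y₃, hy₃, x₂, hx₂, rfl⟩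
        rw [← hXY] at hc
        obtain ⟨x₄, hx₄, y₄, hy₄, e₃⟩ := hc
        replace e₃ : x₄ * y₄ = y₃ * x₂ := e₃
        refine (hmem _).mpr ⟨h₃, hh₃, x₄, hx₄, y₄, hy₄, ?_⟩
        calc h₃ * x₄ * y₄ = h₃ * (x₄ * y₄) := by group
          _ = h₃ * (y₃ * x₂) := by rw [e₃]
          _ = (h₃ * y₃) * x₂ := by group
          _ = (y₁⁻¹ * h₂) * x₂ := by rw [e₂]
          _ = y₁⁻¹ * (h₂ * x₂) := by group
          _ = y₁⁻¹ * (x₁⁻¹ * h₁⁻¹) := by rw [e₁]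
          _ = (h₁ * x₁ * y₁)⁻¹ := by group }
  apply le_antisymm
  · have hle : A ⊔ B ≤ K := by
      apply sup_le
      · intro a ha
        have ha' : a ∈ (A : Set G) := ha
        rw [hAeq] at ha'
        obtain ⟨h, hh, x, hx, he⟩ := ha'
        replace he : h * x = a := he
        exact (hmem _).mpr ⟨h, hh, x, hx, 1, one_mem Y, by rw [← he]; group⟩
      · intro b hb
        have hb' : b ∈ (B : Set G) := hb
        rw [hBeq] at hb'
        obtain ⟨h, hh, y, hy, he⟩ := hb'
        replace he : h * y = b := he
        exact (hmem _).mpr ⟨h, hh, 1, one_mem X, y, hy, by rw [← he]; group⟩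
    exact hle
  · intro a ha
    obtain ⟨h, hh, x, hx, y, hy, rfl⟩ := (hmem a).mp ha
    have hxm : x ∈ A ⊔ B := SetLike.le_def.mp le_sup_left (Subgroup.mem_inf.mp hx).1
    have hym : y ∈ A ⊔ B := SetLike.le_def.mp le_sup_right (Subgroup.mem_inf.mp hy).1
    exact mul_mem (mul_mem (SetLike.le_def.mp le_sup_left (hA hh)) hxm) hym
end

section
/- Let I be a finite group in which any two subgroups permute, and let A, B be distinct maximal subgroups of I with H = A ∩ B. Then [I : B] = [A : H] and [I : A] = [B : H], and H is a maximal subgroup of both A and B. -/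
/-!
When subgroups permute, `A ⊔ B` is the set product `A * B`. Two distinct maximal subgroups
therefore satisfy `A * B = I`, so `A` acts transitively on `I ⧸ B` with stabiliser `A ⊓ B`,
which gives `[I : B] = [A : A ⊓ B]`. If `A ⊓ B < K ≤ A`, then `K ⊔ B = I`, i.e. `K * B = I`,
and Dedekind's rule `A = A ∩ K * B = K * (A ⊓ B)` forces `K = A`.
-/

open Pointwise

namespace Subgroup
variable {G : Type*} [Group G]

theorem coe_sup_of_mul_comm {H K : Subgroup G}
    (h : (H : Set G) * (K : Set G) = (K : Set G) * (H : Set G)) :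
    ((H ⊔ K : Subgroup G) : Set G) = (H : Set G) * (K : Set G) := by
  let S : Subgroup G :=
    { carrier := H * K
      one_mem' := ⟨1, one_mem H, 1, one_mem K, one_mul 1⟩
      mul_mem' := fun hx hy => by
        have hS : ((H : Set G) * K) * (H * K) = H * K := by
          rw [mul_assoc, ← mul_assoc (K : Set G), ← h, mul_assoc, coe_mul_coe, ← mul_assoc,
            coe_mul_coe]
        exact hS ▸ Set.mul_mem_mul hx hy
      inv_mem' := fun hx => by
        have hS : ((H : Set G) * K)⁻¹ = H * K := by rw [mul_inv_rev, inv_coe_set, inv_coe_set, h]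
        exact hS ▸ Set.inv_mem_inv.mpr hx }
  have hle : H ⊔ K ≤ S := sup_le (fun x hx => ⟨x, hx, 1, one_mem K, mul_one x⟩)
    (fun x hx => ⟨1, one_mem H, x, hx, one_mul x⟩)
  refine subset_antisymm hle ?_
  rintro _ ⟨x, hx, y, hy, rfl⟩
  exact mul_mem (mem_sup_left hx) (mem_sup_right hy)

theorem relIndex_eq_index_of_mul_eq_univ {H K : Subgroup G}
    (h : (K : Set G) * (H : Set G) = Set.univ) : H.relIndex K = H.index := by
  have : MulAction.IsPretransitive K (G ⧸ H) := by
    refine (MulAction.isPretransitive_iff_base ((1 : G) : G ⧸ H)).mpr fun x => ?_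
    induction x using QuotientGroup.induction_on with | H g => ?_
    obtain ⟨k, hk, x, hx, rfl⟩ : g ∈ (K : Set G) * (H : Set G) := h ▸ Set.mem_univ g
    exact ⟨⟨k, hk⟩, QuotientGroup.eq.mpr (by simpa using hx)⟩
  have hstab : H.subgroupOf K = MulAction.stabilizer K ((1 : G) : G ⧸ H) := by
    ext x
    exact (SetLike.ext_iff.mp (MulAction.stabilizer_quotient H) (x : G)).symm
  rw [relIndex, hstab, MulAction.index_stabilizer_of_transitive, index]

theorem inf_covBy_of_isCoatom {A B : Subgroup G} (hB : IsCoatom B) (hAB : ¬ A ≤ B)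
    (hperm : ∀ K ≤ A, (K : Set G) * (B : Set G) = (B : Set G) * (K : Set G)) : A ⊓ B ⋖ A := by
  refine ⟨inf_lt_left.mpr hAB, fun K hK hKA => hKA.not_ge fun a ha => ?_⟩
  have hKB : ¬ K ≤ B := fun h => hK.not_ge (le_inf hKA.le h)
  have hmul : (K : Set G) * (B : Set G) = Set.univ := by
    rw [← coe_sup_of_mul_comm (hperm K hKA.le),
      (hB.not_le_iff_codisjoint.mp hKB).symm.eq_top, coe_top]
  obtain ⟨k, hk, x, hx, rfl⟩ : a ∈ (K : Set G) * ((B ⊓ A : Subgroup G) : Set G) := by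
    rw [mul_inf_assoc _ _ _ hKA.le, hmul]
    exact ⟨trivial, ha⟩
  exact mul_mem hk (hK.le ⟨hx.2, hx.1⟩)

end Subgroup

theorem stmt5_general {I : Type*} [Group I]
    (hperm : ∀ I₁ I₂ : Subgroup I, (I₁ : Set I) * (I₂ : Set I) = (I₂ : Set I) * (I₁ : Set I))
    (A B : Subgroup I) (hA : IsCoatom A) (hB : IsCoatom B) (hAB : A ≠ B) :
    B.index = (A ⊓ B).relIndex A ∧ A.index = (A ⊓ B).relIndex B ∧
      (A ⊓ B < A ∧ ∀ K : Subgroup I, A ⊓ B < K → K ≤ A → K = A) ∧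
      (A ⊓ B < B ∧ ∀ K : Subgroup I, A ⊓ B < K → K ≤ B → K = B) := by
  have hmul : (A : Set I) * (B : Set I) = Set.univ := by
    rw [← Subgroup.coe_sup_of_mul_comm (hperm A B), hA.sup_eq_top_of_ne hB hAB,
      Subgroup.coe_top]
  have hAB' : ¬ A ≤ B := fun h => hAB ((hA.le_iff_eq hB.ne_top).mp h).symm
  have hBA' : ¬ B ≤ A := fun h => hAB ((hB.le_iff_eq hA.ne_top).mp h)
  have hcovA : A ⊓ B ⋖ A := Subgroup.inf_covBy_of_isCoatom hB hAB' fun K _ => hperm K B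
  have hcovB : A ⊓ B ⋖ B :=
    inf_comm A B ▸ Subgroup.inf_covBy_of_isCoatom hA hBA' fun K _ => hperm K A
  refine ⟨?_, ?_, ⟨hcovA.lt, fun K hK hKA => ?_⟩, ⟨hcovB.lt, fun K hK hKB => ?_⟩⟩
  · rw [Subgroup.inf_relIndex_left, Subgroup.relIndex_eq_index_of_mul_eq_univ hmul]
  · rw [Subgroup.inf_relIndex_right,
      Subgroup.relIndex_eq_index_of_mul_eq_univ (hperm A B ▸ hmul)]
  · exact (hcovA.eq_or_eq hK.le hKA).resolve_left hK.ne'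
  · exact (hcovB.eq_or_eq hK.le hKB).resolve_left hK.ne'

/-- In a finite quasi-Hamiltonian group, if `A ≠ B` are maximal subgroups and
`H = A ∩ B`, then `[I:B] = [A:H]`, `[I:A] = [B:H]`, and `H` is maximal in both
`A` and `B`. -/
theorem stmt5 {I : Type*} [Group I] [Finite I]
    (hperm : ∀ I₁ I₂ : Subgroup I, (I₁ : Set I) * (I₂ : Set I) = (I₂ : Set I) * (I₁ : Set I))
    (A B : Subgroup I) (hA : IsCoatom A) (hB : IsCoatom B) (hAB : A ≠ B) :
    B.index = (A ⊓ B).relIndex A ∧ A.index = (A ⊓ B).relIndex B ∧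
      (A ⊓ B < A ∧ ∀ K : Subgroup I, A ⊓ B < K → K ≤ A → K = A) ∧
      (A ⊓ B < B ∧ ∀ K : Subgroup I, A ⊓ B < K → K ≤ B → K = B) :=
  stmt5_general hperm A B hA hB hAB
end

section
/- Let Ω be a finite transitive G-set, g ∈ G with a single cycle on Ω (⟨g⟩ acts transitively on Ω), and let φ, ψ be congruences on Ω with no nontrivial common refinement and no nontrivial common coarsening. If a and b are the sizes of Ω/φ and Ω/ψ, then gcd(a, b) = 1 and Ω is isomorphic as a G-set to Ω/φ × Ω/ψ. -/
open AddSubgroup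

section Aux

variable {G Ω : Type*} [Group G] [MulAction G Ω]

private lemma smul_pow_aux (g : G) (x₀ : Ω) (k l : ℤ) :
    g ^ k • g ^ l • x₀ = g ^ (k + l) • x₀ := by
  rw [smul_smul, ← zpow_add]

/-- The exponent subgroup of an invariant setoid. -/
def expSub (g : G) (x₀ : Ω) (ρ : Setoid Ω)
    (hρ : ∀ (σ : G) (x y : Ω), ρ.r x y → ρ.r (σ • x) (σ • y)) : AddSubgroup ℤ where
  carrier := {n | ρ.r (g ^ n • x₀) x₀}
  zero_mem' := by
    simp only [Set.mem_setOf_eq, zpow_zero, one_smul]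
    exact ρ.refl _
  add_mem' := by
    intro n m hn hm
    simp only [Set.mem_setOf_eq] at *
    have := hρ (g ^ n) _ _ hm
    rw [smul_pow_aux] at this
    exact ρ.trans this hn
  neg_mem' := by
    intro n hn
    simp only [Set.mem_setOf_eq] at *
    have := hρ (g ^ (-n)) _ _ hn
    rw [smul_pow_aux, neg_add_cancel, zpow_zero, one_smul] at this
    exact ρ.symm this

lemma mem_expSub_iff (g : G) (x₀ : Ω) (ρ : Setoid Ω)
    (hρ : ∀ (σ : G) (x y : Ω), ρ.r x y → ρ.r (σ • x) (σ • y)) (n : ℤ) :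
    n ∈ expSub g x₀ ρ hρ ↔ ρ.r (g ^ n • x₀) x₀ := Iff.rfl

lemma rel_iff_sub_mem (g : G) (x₀ : Ω) (ρ : Setoid Ω)
    (hρ : ∀ (σ : G) (x y : Ω), ρ.r x y → ρ.r (σ • x) (σ • y)) (n m : ℤ) :
    ρ.r (g ^ n • x₀) (g ^ m • x₀) ↔ n - m ∈ expSub g x₀ ρ hρ := by
  rw [mem_expSub_iff]
  constructor
  · intro h
    have := hρ (g ^ (-m)) _ _ h
    rwa [smul_pow_aux, smul_pow_aux, neg_add_cancel, zpow_zero, one_smul,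
      neg_add_eq_sub] at this
  · intro h
    have := hρ (g ^ m) _ _ h
    rwa [smul_pow_aux, add_sub_cancel] at this

/-- The quotient by an invariant setoid is in bijection with `ℤ` modulo the
exponent subgroup, provided `g` acts with a single cycle. -/
noncomputable def quotEquiv (g : G) (x₀ : Ω)
    (hsurj : ∀ y : Ω, ∃ n : ℤ, g ^ n • x₀ = y) (ρ : Setoid Ω)
    (hρ : ∀ (σ : G) (x y : Ω), ρ.r x y → ρ.r (σ • x) (σ • y)) :
    (ℤ ⧸ expSub g x₀ ρ hρ) ≃ Quotient ρ := by
  refine Equiv.ofBijective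
    (Quotient.lift (fun n : ℤ => Quotient.mk ρ (g ^ n • x₀)) ?_) ⟨?_, ?_⟩
  · intro n m hnm
    have h : -n + m ∈ expSub g x₀ ρ hρ := (QuotientAddGroup.leftRel_apply).mp hnm
    have h' : n - m ∈ expSub g x₀ ρ hρ := by
      have e : n - m = -(-n + m) := by ring
      rw [e]; exact neg_mem h
    exact Quotient.sound ((rel_iff_sub_mem g x₀ ρ hρ n m).mpr h')
  · intro x y
    induction x using QuotientAddGroup.induction_on
    induction y using QuotientAddGroup.induction_on
    rename_i n m
    intro h
    have h' : ρ.r (g ^ n • x₀) (g ^ m • x₀) := Quotient.exact h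
    have := (rel_iff_sub_mem g x₀ ρ hρ n m).mp h'
    refine (QuotientAddGroup.eq).mpr ?_
    have e : -n + m = -(n - m) := by ring
    rw [e]; exact neg_mem this
  · intro c
    induction c using Quotient.ind
    rename_i y
    obtain ⟨n, hn⟩ := hsurj y
    exact ⟨QuotientAddGroup.mk n, by simp [hn]⟩

lemma card_quot_eq (g : G) (x₀ : Ω)
    (hsurj : ∀ y : Ω, ∃ n : ℤ, g ^ n • x₀ = y) (ρ : Setoid Ω)
    (hρ : ∀ (σ : G) (x y : Ω), ρ.r x y → ρ.r (σ • x) (σ • y)) (d : ℤ)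
    (hd : expSub g x₀ ρ hρ = zmultiples d) :
    Nat.card (Quotient ρ) = d.natAbs := by
  rw [← Nat.card_congr (quotEquiv g x₀ hsurj ρ hρ), hd,
    Nat.card_congr (Int.quotientZMultiplesEquivZMod d).toEquiv, Nat.card_zmod]

end Aux

/-- Case 1: if `g` is a single cycle on the finite transitive `G`-set `Ω`, and
`φ, ψ` are nontrivial congruences with trivial meet and trivial join, then
`gcd(|Ω/φ|, |Ω/ψ|) = 1` and the canonical map `Ω → Ω/φ × Ω/ψ` is an
isomorphism of `G`-sets. -/
theorem stmt11 {G Ω : Type*} [Group G] [MulAction G Ω] [Finite Ω]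
    [MulAction.IsPretransitive G Ω] (g : G)
    (hg : ∀ x y : Ω, ∃ n : ℤ, g ^ n • x = y)
    (φ ψ : Setoid Ω)
    (hφ : ∀ (σ : G) (x y : Ω), φ.r x y → φ.r (σ • x) (σ • y))
    (hψ : ∀ (σ : G) (x y : Ω), ψ.r x y → ψ.r (σ • x) (σ • y))
    (hφbot : φ ≠ ⊥) (hφtop : φ ≠ ⊤) (hψbot : ψ ≠ ⊥) (hψtop : ψ ≠ ⊤)
    (hmeet : φ ⊓ ψ = ⊥) (hjoin : φ ⊔ ψ = ⊤)
    (a b : ℕ) (hA : a = Nat.card (Quotient φ)) (hB : b = Nat.card (Quotient ψ)) :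
    Nat.gcd a b = 1 ∧
      Function.Bijective (fun x : Ω => (Quotient.mk φ x, Quotient.mk ψ x)) := by
  -- Ω is nonempty
  cases isEmpty_or_nonempty Ω with
  | inl hE =>
    exact absurd (Setoid.ext fun x => isEmptyElim x) hφbot
  | inr hNE =>
  obtain ⟨x₀⟩ := hNE
  have hsurj : ∀ y : Ω, ∃ n : ℤ, g ^ n • x₀ = y := fun y => hg x₀ y
  -- bottom setoid invariance
  have hbotrel : ∀ x y : Ω, (⊥ : Setoid Ω).r x y ↔ x = y := by
    intro x y
    constructor
    · intro h; exact h
    · intro h; exact h ▸ (⊥ : Setoid Ω).refl x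
  have hbotinv : ∀ (σ : G) (x y : Ω), (⊥ : Setoid Ω).r x y → (⊥ : Setoid Ω).r (σ • x) (σ • y) := by
    intro σ x y h
    rw [hbotrel] at h ⊢
    rw [h]
  set Sφ := expSub g x₀ φ hφ with hSφ
  set Sψ := expSub g x₀ ψ hψ with hSψ
  set S0 := expSub g x₀ ⊥ hbotinv with hS0
  obtain ⟨α, hα⟩ := Int.subgroup_cyclic Sφ
  rw [← zmultiples_eq_closure] at hα
  obtain ⟨β, hβ⟩ := Int.subgroup_cyclic Sψ
  rw [← zmultiples_eq_closure] at hβ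
  have ha : a = α.natAbs := by rw [hA, card_quot_eq g x₀ hsurj φ hφ α hα]
  have hb : b = β.natAbs := by rw [hB, card_quot_eq g x₀ hsurj ψ hψ β hβ]
  -- meet: S0 = Sφ ⊓ Sψ
  have hinf : S0 = Sφ ⊓ Sψ := by
    ext n
    rw [AddSubgroup.mem_inf, mem_expSub_iff, mem_expSub_iff, mem_expSub_iff, hbotrel]
    have : (φ ⊓ ψ).r (g ^ n • x₀) x₀ ↔ φ.r (g ^ n • x₀) x₀ ∧ ψ.r (g ^ n • x₀) x₀ :=
      Iff.rfl
    rw [← this, hmeet, hbotrel]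
  -- join: 1 ∈ Sφ ⊔ Sψ
  have hkey : ∀ x y : Ω, Relation.EqvGen (fun x y => φ.r x y ∨ ψ.r x y) x y →
      ∀ n m : ℤ, g ^ n • x₀ = x → g ^ m • x₀ = y → n - m ∈ Sφ ⊔ Sψ := by
    intro x y h
    induction h with
    | rel x y hxy =>
      intro n m hn hm
      subst hn; subst hm
      rcases hxy with h | h
      · exact AddSubgroup.mem_sup_left ((rel_iff_sub_mem g x₀ φ hφ n m).mp h)
      · exact AddSubgroup.mem_sup_right ((rel_iff_sub_mem g x₀ ψ hψ n m).mp h)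
    | refl x =>
      intro n m hn hm
      subst hn
      have : φ.r (g ^ n • x₀) (g ^ m • x₀) := hm ▸ φ.refl _
      exact AddSubgroup.mem_sup_left ((rel_iff_sub_mem g x₀ φ hφ n m).mp this)
    | symm x y hxy ih =>
      intro n m hn hm
      have := neg_mem (ih m n hm hn)
      rwa [neg_sub] at this
    | trans x y z hxy hyz ih1 ih2 =>
      intro n m hn hm
      obtain ⟨k, hk⟩ := hsurj y
      have := add_mem (ih1 n k hn hk) (ih2 k m hk hm)
      rwa [sub_add_sub_cancel] at this
  have hone : (1 : ℤ) ∈ Sφ ⊔ Sψ := by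
    have htop : (φ ⊔ ψ).r (g ^ (1:ℤ) • x₀) (g ^ (0:ℤ) • x₀) := by
      rw [hjoin]; trivial
    rw [Setoid.sup_eq_eqvGen] at htop
    have := hkey _ _ htop 1 0 rfl rfl
    simpa using this
  -- coprimality
  have hcop : IsCoprime α β := by
    obtain ⟨u, hu, v, hv, huv⟩ := AddSubgroup.mem_sup.mp hone
    rw [hα, mem_zmultiples_iff] at hu
    rw [hβ, mem_zmultiples_iff] at hv
    obtain ⟨s, hs⟩ := hu
    obtain ⟨t, ht⟩ := hv
    exact ⟨s, t, by rw [← huv, ← hs, ← ht, zsmul_eq_mul, zsmul_eq_mul]; push_cast; ring⟩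
  have hgcd : Nat.gcd a b = 1 := by
    rw [ha, hb]
    exact Int.isCoprime_iff_gcd_eq_one.mp hcop
  -- Sφ ⊓ Sψ = zmultiples (α * β)
  have hinf2 : Sφ ⊓ Sψ = zmultiples (α * β) := by
    ext n
    rw [AddSubgroup.mem_inf, hα, hβ, Int.mem_zmultiples_iff, Int.mem_zmultiples_iff,
      Int.mem_zmultiples_iff]
    constructor
    · rintro ⟨h1, h2⟩; exact hcop.mul_dvd h1 h2
    · intro h
      exact ⟨(dvd_mul_right α β).trans h, (dvd_mul_left β α).trans h⟩
  -- card Ω = a * b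
  have hΩbot : Nat.card Ω = Nat.card (Quotient (⊥ : Setoid Ω)) := by
    refine Nat.card_congr (Equiv.ofBijective (Quotient.mk _) ⟨?_, Quotient.exists_rep⟩)
    intro x y h
    exact Quotient.exact h
  have hN : Nat.card Ω = a * b := by
    rw [hΩbot, card_quot_eq g x₀ hsurj ⊥ hbotinv (α * β) (by rw [← hinf2, ← hinf]),
      Int.natAbs_mul, ha, hb]
  -- injectivity
  have hinj : Function.Injective (fun x : Ω => (Quotient.mk φ x, Quotient.mk ψ x)) := by
    intro x y h
    simp only [Prod.mk.injEq] at h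
    have h1 : φ.r x y := Quotient.exact h.1
    have h2 : ψ.r x y := Quotient.exact h.2
    have h3 : (φ ⊓ ψ).r x y := ⟨h1, h2⟩
    rw [hmeet] at h3
    exact h3
  refine ⟨hgcd, (Nat.bijective_iff_injective_and_card _).mpr ⟨hinj, ?_⟩⟩
  rw [Nat.card_prod, ← hA, ← hB, hN]
end

section
/- Let Ω be a finite transitive G-set and g ∈ G an element with exactly two orbits on Ω, of lengths ℓ₁ and ℓ₂. Suppose φ and ψ are congruences on Ω with no nontrivial common refinement and no nontrivial common coarsening, where g has two orbits of lengths a₁, a₂ on Ω/φ and one orbit of length b on Ω/ψ. Then gcd(a₁, b) = gcd(a₂, b) = 1 and Ω ≅ Ω/φ × Ω/ψ as G-sets. -/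
/-!
Let `π₁ : Ω → Ω/φ` and `π₂ : Ω → Ω/ψ` be the quotient maps; `b = |Ω/ψ|` is the `g`-period of
every `ψ`-class. As `φ ⊓ ψ = ⊥`, the `g`-period of a point is the lcm of the periods of its two
images. The two cycles of `g` on `Ω` map to different cycles on `Ω/φ`, so every `φ`-class lies in
one cycle of `g` and is an orbit of `g ^ a`, where `a` is the period of the class; hence it has
`lcm a b / a = b / gcd a b` points. By transitivity all `φ`-classes have the same size, so
`d = gcd a b` does not depend on the class. The relation "the `ψ`-classes lie in one
`⟨g ^ d⟩`-orbit" then contains both `φ` and `ψ`, hence is total; applied to `x` and `g • x` it gives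
`b ∣ d * k - 1` for some `k`, and `d ∣ b` forces `d = 1`. Injectivity of `(π₁, π₂)` is
`φ ⊓ ψ = ⊥`; surjectivity is the Chinese remainder theorem for the coprime periods `a` and `b`.
-/

open Function Subgroup

theorem Nat.lcm_div_left_eq_div_gcd {a : ℕ} (ha : 0 < a) (b : ℕ) :
    Nat.lcm a b / a = b / Nat.gcd a b := by
  rw [Nat.lcm, Nat.mul_div_assoc a (Nat.gcd_dvd_right a b), Nat.mul_div_cancel_left _ ha]

theorem Function.injective_of_card_eq_two {α β : Type*} {f : α → β} (h : Nat.card α = 2)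
    {a b : α} (hab : f a ≠ f b) : Injective f := by
  have hcases : ∀ c, c = a ∨ c = b := by
    obtain ⟨c, -, hc⟩ := (Nat.card_eq_two_iff' a).mp h
    have hba : b ≠ a := fun hba => hab (hba ▸ rfl)
    exact fun e => or_iff_not_imp_left.mpr fun hea => (hc e hea).trans (hc b hba).symm
  intro u v huv
  rcases hcases u with rfl | rfl <;> rcases hcases v with rfl | rfl
  all_goals first | rfl | exact absurd huv hab | exact absurd huv.symm hab

theorem Setoid.injective_prod_mk_of_inf_eq_bot {α : Type*} {r s : Setoid α} (h : r ⊓ s = ⊥) :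
    Injective fun a => (Quotient.mk r a, Quotient.mk s a) := fun a b hab => by
  have hrs : (r ⊓ s) a b :=
    ⟨Quotient.exact (congrArg Prod.fst hab), Quotient.exact (congrArg Prod.snd hab)⟩
  rwa [h] at hrs

abbrev Setoid.quotientMulAction {G α : Type*} [Group G] [MulAction G α] (r : Setoid α)
    (hr : ∀ (σ : G) (x y : α), r x y → r (σ • x) (σ • y)) : MulAction G (Quotient r) where
  smul σ := Quotient.map (σ • ·) (hr σ)
  one_smul := Quotient.ind fun x => congrArg (Quotient.mk r) (one_smul G x)
  mul_smul σ τ := Quotient.ind fun x => congrArg (Quotient.mk r) (mul_smul σ τ x)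

namespace MulAction

section Monoid

variable {M α β γ : Type*} [Monoid M] [MulAction M α] [MulAction M β] [MulAction M γ] {m : M}

theorem period_eq_of_isLeast {a : α} {n : ℕ} (h : IsLeast {k | 0 < k ∧ m ^ k • a = a} n) :
    period m a = n :=
  le_antisymm (period_le_of_fixed h.1.1 h.1.2)
    (h.2 ⟨period_pos_of_fixed h.1.1 h.1.2, pow_period_smul m a⟩)

theorem period_pow (m : M) (a : α) {d : ℕ} (hd : d ≠ 0) :
    period (m ^ d) a = period m a / Nat.gcd (period m a) d := by
  simp only [period_eq_minimalPeriod, ← smul_iterate, minimalPeriod_iterate_eq_div_gcd hd]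

theorem period_map_dvd (f : α →[M] β) (m : M) (a : α) : period m (f a) ∣ period m a :=
  pow_smul_eq_iff_period_dvd.mp (by rw [← map_smul, pow_period_smul])

theorem period_eq_lcm_of_injective (f₁ : α →[M] β) (f₂ : α →[M] γ)
    (hf : Injective fun a => (f₁ a, f₂ a)) (m : M) (a : α) :
    period m a = Nat.lcm (period m (f₁ a)) (period m (f₂ a)) :=
  Nat.dvd_right_iff_eq.mp fun k => by
    simp only [Nat.lcm_dvd_iff, ← pow_smul_eq_iff_period_dvd, ← map_smul, ← Prod.mk.injEq]
    exact hf.eq_iff.symm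

end Monoid

variable {G α β γ : Type*} [Group G] [MulAction G α] [MulAction G β] [MulAction G γ] {g : G}

theorem mem_orbit_zpowers_iff {a b : α} : b ∈ orbit (zpowers g) a ↔ ∃ n : ℤ, g ^ n • a = b := by
  constructor
  · rintro ⟨⟨_, n, rfl⟩, rfl⟩
    exact ⟨n, rfl⟩
  · rintro ⟨n, rfl⟩
    exact ⟨⟨g ^ n, zpow_mem_zpowers g n⟩, rfl⟩

theorem zpow_smul_mem_orbit_zpowers_pow {d : ℕ} {n : ℤ} (h : (d : ℤ) ∣ n) (a : α) :
    g ^ n • a ∈ orbit (zpowers (g ^ d)) a := by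
  obtain ⟨k, rfl⟩ := h
  exact mem_orbit_zpowers_iff.mpr ⟨k, by rw [← zpow_natCast, ← zpow_mul]⟩

theorem zpow_smul_eq_zpow_smul_iff {a : α} {m n : ℤ} :
    g ^ m • a = g ^ n • a ↔ (period g a : ℤ) ∣ m - n := by
  rw [← zpow_smul_eq_iff_period_dvd, sub_eq_neg_add, zpow_add, zpow_neg, mul_smul, inv_smul_eq_iff]

theorem card_orbit_zpowers [Finite α] (g : G) (a : α) :
    Nat.card (orbit (zpowers g) a) = period g a := by
  have := Fintype.ofFinite (orbit (zpowers g) a)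
  rw [Nat.card_eq_fintype_card, period_eq_minimalPeriod, minimalPeriod_eq_card]

theorem period_pos_of_finite [Finite α] (g : G) (a : α) : 0 < period g a := by
  have := (nonempty_orbit (M := zpowers g) a).to_subtype
  rw [← card_orbit_zpowers]
  exact Nat.card_pos

theorem period_eq_card_of_forall_zpow_smul_eq [Finite α] {a : α}
    (h : ∀ b, ∃ n : ℤ, g ^ n • a = b) : period g a = Nat.card α := by
  rw [← card_orbit_zpowers, Set.eq_univ_of_forall fun b => mem_orbit_zpowers_iff.mpr (h b),
    Nat.card_univ]

theorem period_map_pos [Finite α] (f : α →[G] β) (g : G) (a : α) : 0 < period g (f a) :=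
  Nat.pos_of_dvd_of_pos (period_map_dvd f g a) (period_pos_of_finite g a)

theorem orbitRel_le_comap (f : α →[G] β) (H : Subgroup G) :
    orbitRel H α ≤ (orbitRel H β).comap f := by
  rintro _ a ⟨h, rfl⟩
  exact ⟨h, (map_smul f (h : G) a).symm⟩

theorem ker_le_orbitRel_of_card_eq_two (f : α →[G] β) {H : Subgroup G}
    (h2 : Nat.card (Quotient (orbitRel H α)) = 2) {a b : α} (hab : f b ∉ orbit H (f a)) :
    Setoid.ker f ≤ orbitRel H α := by
  let F := Quotient.map (sa := orbitRel H α) (sb := orbitRel H β) f (orbitRel_le_comap f H)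
  have hF : Injective F :=
    injective_of_card_eq_two h2 (a := ⟦a⟧) (b := ⟦b⟧) fun h => hab (Quotient.exact h.symm)
  exact fun c e hce => Quotient.exact (hF (congrArg (Quotient.mk _) hce))

theorem exists_zpow_smul_eq_of_map_eq (f : α →[G] β) (hf : Setoid.ker f ≤ orbitRel (zpowers g) α)
    {a b : α} (h : f b = f a) : ∃ n : ℤ, (period g (f a) : ℤ) ∣ n ∧ g ^ n • a = b := by
  obtain ⟨n, rfl⟩ := mem_orbit_zpowers_iff.mp (hf h)
  exact ⟨n, zpow_smul_eq_iff_period_dvd.mp (by rwa [map_smul] at h), rfl⟩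

theorem preimage_singleton_eq_orbit_zpowers_pow (f : α →[G] β)
    (hf : Setoid.ker f ≤ orbitRel (zpowers g) α) (a : α) :
    f ⁻¹' {f a} = orbit (zpowers (g ^ period g (f a))) a := by
  ext b
  refine ⟨fun h => ?_, fun h => ?_⟩
  · obtain ⟨n, hn, rfl⟩ := exists_zpow_smul_eq_of_map_eq f hf h
    exact zpow_smul_mem_orbit_zpowers_pow hn a
  · obtain ⟨n, rfl⟩ := mem_orbit_zpowers_iff.mp h
    rw [Set.mem_preimage, Set.mem_singleton_iff, map_smul, ← zpow_natCast, ← zpow_mul,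
      zpow_smul_eq_iff_period_dvd]
    exact dvd_mul_right _ _

theorem card_preimage_singleton [Finite α] (f : α →[G] β)
    (hf : Setoid.ker f ≤ orbitRel (zpowers g) α) (a : α) :
    Nat.card (f ⁻¹' {f a}) = period g a / period g (f a) := by
  rw [preimage_singleton_eq_orbit_zpowers_pow f hf, card_orbit_zpowers,
    period_pow g a (period_map_pos f g a).ne', Nat.gcd_eq_right (period_map_dvd f g a)]

theorem card_preimage_singleton_smul (f : α →[G] β) (σ : G) (b : β) :
    Nat.card (f ⁻¹' {σ • b}) = Nat.card (f ⁻¹' {b}) :=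
  Nat.card_congr ((MulAction.toPerm σ).subtypeEquiv fun a => by
    simp [map_smul, smul_left_cancel_iff]).symm

theorem ker_le_orbitRel_zpowers_pow (f : α →[G] β) (hf : Setoid.ker f ≤ orbitRel (zpowers g) α)
    {d : ℕ} (hd : ∀ a, d ∣ period g (f a)) : Setoid.ker f ≤ orbitRel (zpowers (g ^ d)) α := by
  intro b a h
  obtain ⟨n, hn, rfl⟩ := exists_zpow_smul_eq_of_map_eq f hf h
  exact zpow_smul_mem_orbit_zpowers_pow ((Int.natCast_dvd_natCast.mpr (hd a)).trans hn) a

theorem eq_one_of_sup_ker_eq_top (f₁ : α →[G] β) (f₂ : α →[G] γ)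
    (hf₁ : Setoid.ker f₁ ≤ orbitRel (zpowers g) α) (hsup : Setoid.ker f₁ ⊔ Setoid.ker f₂ = ⊤)
    {d : ℕ} (hd₁ : ∀ a, d ∣ period g (f₁ a)) (a : α) (hd₂ : d ∣ period g (f₂ a)) : d = 1 := by
  have hle : Setoid.ker f₁ ⊔ Setoid.ker f₂ ≤ (orbitRel (zpowers (g ^ d)) γ).comap f₂ :=
    sup_le ((ker_le_orbitRel_zpowers_pow f₁ hf₁ hd₁).trans (orbitRel_le_comap f₂ _))
      fun b c h => by rw [Setoid.comap_rel, Setoid.ker_def.mp h]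
  rw [hsup] at hle
  obtain ⟨n, hn⟩ := mem_orbit_zpowers_iff.mp (hle (show (⊤ : Setoid α) (g • a) a from trivial))
  rw [map_smul, ← zpow_natCast, ← zpow_mul] at hn
  have h1 : (period g (f₂ a) : ℤ) ∣ d * n - 1 :=
    zpow_smul_eq_zpow_smul_iff.mp (by rwa [zpow_one])
  have h2 : (d : ℤ) ∣ 1 := by
    simpa using dvd_sub (dvd_mul_right (d : ℤ) n) ((Int.natCast_dvd_natCast.mpr hd₂).trans h1)
  exact_mod_cast Int.eq_one_of_dvd_one (by positivity) h2

theorem gcd_period_eq_gcd_period [Finite α] [IsPretransitive G α] (f₁ : α →[G] β) (f₂ : α →[G] γ)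
    (hf : Injective fun a => (f₁ a, f₂ a)) (hf₁ : Setoid.ker f₁ ≤ orbitRel (zpowers g) α)
    {b : ℕ} (hf₂ : ∀ a, period g (f₂ a) = b) (a a' : α) :
    Nat.gcd (period g (f₁ a)) b = Nat.gcd (period g (f₁ a')) b := by
  have hcard : ∀ a, Nat.card (f₁ ⁻¹' {f₁ a}) = b / Nat.gcd (period g (f₁ a)) b := fun a => by
    rw [card_preimage_singleton f₁ hf₁, period_eq_lcm_of_injective f₁ f₂ hf, hf₂,
      Nat.lcm_div_left_eq_div_gcd (period_map_pos f₁ g a)]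
  have hb : b ≠ 0 := hf₂ a ▸ (period_map_pos f₂ g a).ne'
  obtain ⟨σ, rfl⟩ := exists_smul_eq G a a'
  have := card_preimage_singleton_smul f₁ σ (f₁ a)
  rw [← map_smul, hcard, hcard] at this
  exact (Nat.div_eq_iff_eq_of_dvd_dvd hb (Nat.gcd_dvd_right _ _) (Nat.gcd_dvd_right _ _)).mp
    this.symm

theorem coprime_period_of_sup_ker_eq_top [Finite α] [IsPretransitive G α] (f₁ : α →[G] β)
    (f₂ : α →[G] γ) (hf : Injective fun a => (f₁ a, f₂ a))
    (hf₁ : Setoid.ker f₁ ≤ orbitRel (zpowers g) α) (hsup : Setoid.ker f₁ ⊔ Setoid.ker f₂ = ⊤)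
    {b : ℕ} (hf₂ : ∀ a, period g (f₂ a) = b) (a : α) :
    Nat.Coprime (period g (f₁ a)) (period g (f₂ a)) := by
  rw [hf₂]
  refine eq_one_of_sup_ker_eq_top f₁ f₂ hf₁ hsup (fun a' => ?_) a (hf₂ a ▸ Nat.gcd_dvd_right _ _)
  rw [gcd_period_eq_gcd_period f₁ f₂ hf hf₁ hf₂ a a']
  exact Nat.gcd_dvd_left _ _

theorem exists_zpow_smul_eq_and_zpow_smul_eq {b : β} {c : γ}
    (h : Nat.Coprime (period g b) (period g c)) (n : ℤ) :
    ∃ m : ℤ, g ^ m • b = b ∧ g ^ m • c = g ^ n • c := by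
  obtain ⟨u, v, huv⟩ := Nat.isCoprime_iff_coprime.mpr h
  refine ⟨n * u * period g b, zpow_smul_eq_iff_period_dvd.mpr (dvd_mul_left _ _),
    zpow_smul_eq_zpow_smul_iff.mpr ⟨-(n * v), ?_⟩⟩
  linear_combination n * huv

theorem surjective_prod_of_coprime (f₁ : α →[G] β) (f₂ : α →[G] γ) (hf₁ : Surjective f₁)
    (hf₂ : ∀ a c, ∃ n : ℤ, g ^ n • f₂ a = c)
    (hcop : ∀ a, Nat.Coprime (period g (f₁ a)) (period g (f₂ a))) :
    Surjective fun a => (f₁ a, f₂ a) := by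
  rintro ⟨b, c⟩
  obtain ⟨a, rfl⟩ := hf₁ b
  obtain ⟨n, rfl⟩ := hf₂ a c
  obtain ⟨m, hm₁, hm₂⟩ := exists_zpow_smul_eq_and_zpow_smul_eq (hcop a) n
  exact ⟨g ^ m • a, by simp only [map_smul, hm₁, hm₂]⟩

end MulAction

open MulAction

theorem stmt13_general {G Ω : Type*} [Group G] [MulAction G Ω] [Finite Ω]
    [MulAction.IsPretransitive G Ω] (g : G)
    (hg : Nat.card (Quotient (MulAction.orbitRel (Subgroup.zpowers g) Ω)) = 2)
    (φ ψ : Setoid Ω)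
    (hφ : ∀ (σ : G) (x y : Ω), φ.r x y → φ.r (σ • x) (σ • y))
    (hψ : ∀ (σ : G) (x y : Ω), ψ.r x y → ψ.r (σ • x) (σ • y))
    (hmeet : φ ⊓ ψ = ⊥) (hjoin : φ ⊔ ψ = ⊤)
    (a₁ a₂ b : ℕ)
    -- `g` has exactly two orbits on `Ω/φ`, of lengths `a₁` and `a₂`:
    (h2φ : ∃ x y : Ω, (¬ ∃ n : ℤ, φ.r (g ^ n • x) y) ∧
      (∀ z : Ω, (∃ n : ℤ, φ.r (g ^ n • x) z) ∨ (∃ n : ℤ, φ.r (g ^ n • y) z)) ∧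
      IsLeast {n : ℕ | 0 < n ∧ φ.r (g ^ n • x) x} a₁ ∧
      IsLeast {n : ℕ | 0 < n ∧ φ.r (g ^ n • y) y} a₂)
    -- `g` is a single cycle on `Ω/ψ`, of length `b`:
    (h1ψ : ∀ x y : Ω, ∃ n : ℤ, ψ.r (g ^ n • x) y)
    (hb : b = Nat.card (Quotient ψ)) :
    Nat.gcd a₁ b = 1 ∧ Nat.gcd a₂ b = 1 ∧
      Function.Bijective (fun x : Ω => (Quotient.mk φ x, Quotient.mk ψ x)) := by
  obtain ⟨x, y, hxy, -, ha₁, ha₂⟩ := h2φ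
  let _ := φ.quotientMulAction hφ
  let _ := ψ.quotientMulAction hψ
  let π₁ : Ω →[G] Quotient φ := ⟨Quotient.mk φ, fun _ _ => rfl⟩
  let π₂ : Ω →[G] Quotient ψ := ⟨Quotient.mk ψ, fun _ _ => rfl⟩
  have hinj : Injective fun z => (π₁ z, π₂ z) := Setoid.injective_prod_mk_of_inf_eq_bot hmeet
  have hsup : Setoid.ker π₁ ⊔ Setoid.ker π₂ = ⊤ := by
    rwa [show Setoid.ker π₁ = φ from Setoid.ker_mk_eq φ,
      show Setoid.ker π₂ = ψ from Setoid.ker_mk_eq ψ]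
  have hfiber : Setoid.ker π₁ ≤ orbitRel (zpowers g) Ω :=
    ker_le_orbitRel_of_card_eq_two π₁ hg fun h =>
      hxy ((mem_orbit_zpowers_iff.mp h).imp fun _ => Quotient.exact)
  have hcycle : ∀ z q, ∃ n : ℤ, g ^ n • π₂ z = q :=
    fun z => Quotient.ind fun w => (h1ψ z w).imp fun _ => Quotient.sound
  have hb' : ∀ z, period g (π₂ z) = b :=
    fun z => hb ▸ period_eq_card_of_forall_zpow_smul_eq (hcycle z)
  have hcop := coprime_period_of_sup_ker_eq_top π₁ π₂ hinj hfiber hsup hb'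
  have hφperiod : ∀ z, {n : ℕ | 0 < n ∧ φ.r (g ^ n • z) z} =
      {n | 0 < n ∧ g ^ n • π₁ z = π₁ z} :=
    fun z => Set.ext fun n => and_congr_right fun _ => Quotient.eq.symm
  have ha₁' : period g (π₁ x) = a₁ := period_eq_of_isLeast (hφperiod x ▸ ha₁)
  have ha₂' : period g (π₁ y) = a₂ := period_eq_of_isLeast (hφperiod y ▸ ha₂)
  refine ⟨?_, ?_, hinj, surjective_prod_of_coprime π₁ π₂ Quotient.mk_surjective hcycle hcop⟩
  · rw [← ha₁', ← hb' x]
    exact hcop x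
  · rw [← ha₂', ← hb' y]
    exact hcop y

/-- Case 3: `g` has two orbits on the finite transitive `G`-set `Ω`; `φ, ψ` are
congruences with trivial meet and trivial join; `g` has two orbits (of lengths
`a₁, a₂`) on `Ω/φ` and is a single cycle on `Ω/ψ` (of size `b`).  Then
`gcd(a₁,b) = gcd(a₂,b) = 1` and the canonical map `Ω → Ω/φ × Ω/ψ` is an
isomorphism of `G`-sets. -/
theorem stmt13 {G Ω : Type*} [Group G] [MulAction G Ω] [Finite Ω]
    [MulAction.IsPretransitive G Ω] (g : G)
    (hg : Nat.card (Quotient (MulAction.orbitRel (Subgroup.zpowers g) Ω)) = 2)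
    (φ ψ : Setoid Ω)
    (hφ : ∀ (σ : G) (x y : Ω), φ.r x y → φ.r (σ • x) (σ • y))
    (hψ : ∀ (σ : G) (x y : Ω), ψ.r x y → ψ.r (σ • x) (σ • y))
    (hφbot : φ ≠ ⊥) (hφtop : φ ≠ ⊤) (hψbot : ψ ≠ ⊥) (hψtop : ψ ≠ ⊤)
    (hmeet : φ ⊓ ψ = ⊥) (hjoin : φ ⊔ ψ = ⊤)
    (a₁ a₂ b : ℕ)
    -- `g` has exactly two orbits on `Ω/φ`, of lengths `a₁` and `a₂`:
    (h2φ : ∃ x y : Ω, (¬ ∃ n : ℤ, φ.r (g ^ n • x) y) ∧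
      (∀ z : Ω, (∃ n : ℤ, φ.r (g ^ n • x) z) ∨ (∃ n : ℤ, φ.r (g ^ n • y) z)) ∧
      IsLeast {n : ℕ | 0 < n ∧ φ.r (g ^ n • x) x} a₁ ∧
      IsLeast {n : ℕ | 0 < n ∧ φ.r (g ^ n • y) y} a₂)
    -- `g` is a single cycle on `Ω/ψ`, of length `b`:
    (h1ψ : ∀ x y : Ω, ∃ n : ℤ, ψ.r (g ^ n • x) y)
    (hb : b = Nat.card (Quotient ψ)) :
    Nat.gcd a₁ b = 1 ∧ Nat.gcd a₂ b = 1 ∧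
      Function.Bijective (fun x : Ω => (Quotient.mk φ x, Quotient.mk ψ x)) :=
  stmt13_general g hg φ ψ hφ hψ hmeet hjoin a₁ a₂ b h2φ h1ψ hb
end

section
/- Let Ω be a finite transitive G-set and g ∈ G with exactly two orbits on Ω. Suppose φ, ψ are congruences with no nontrivial common refinement such that ⟨g⟩ acts transitively on Ω/φ (of size a) and on Ω/ψ (of size b). Then gcd(a, b) ≥ 2, with equality if and only if |Ω| = ab (i.e., Ω ≅ Ω/φ × Ω/ψ). -/
/-!
`g ^ n` fixes `x` iff it fixes both the `φ`-class and the `ψ`-class of `x`, and `⟨g⟩` permutes the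
`a` classes of `φ` and the `b` classes of `ψ` cyclically; so `g ^ n • x = x` iff `lcm a b ∣ n`.
Hence both `⟨g⟩`-orbits have `lcm a b` points and `|Ω| = 2 lcm a b`, while `x ↦ (φ-class, ψ-class)`
embeds `Ω` into a set of `a b = gcd a b · lcm a b` points.
-/

open MulAction Subgroup

namespace MulAction

variable {G α : Type*} [Group G] [MulAction G α]

theorem pow_smul_eq_self_iff_card_orbit_zpowers_dvd [Finite α] (g : G) (x : α) (n : ℕ) :
    g ^ n • x = x ↔ Nat.card (orbit (zpowers g) x) ∣ n := by
  have := Fintype.ofFinite (orbit (zpowers g) x)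
  rw [pow_smul_eq_iff_minimalPeriod_dvd, minimalPeriod_eq_card, Nat.card_eq_fintype_card]

theorem pow_smul_eq_self_iff_card_dvd [Finite α] (g : G) [IsPretransitive (zpowers g) α] (x : α)
    (n : ℕ) : g ^ n • x = x ↔ Nat.card α ∣ n := by
  rw [pow_smul_eq_self_iff_card_orbit_zpowers_dvd, orbit_eq_univ, Nat.card_univ]

theorem card_eq_card_orbitRel_quotient_mul [Finite α] {H : Subgroup G} {c : ℕ}
    (hc : ∀ x : α, Nat.card (orbit H x) = c) :
    Nat.card α = Nat.card (orbitRel.Quotient H α) * c := by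
  have := Fintype.ofFinite (orbitRel.Quotient H α)
  rw [Nat.card_congr (selfEquivSigmaOrbits H α), Nat.card_sigma]
  simp [hc, Finset.sum_const, Nat.card_eq_fintype_card]

abbrev quotientOfInvariant (φ : Setoid α)
    (hφ : ∀ (σ : G) (x y : α), φ.r x y → φ.r (σ • x) (σ • y)) : MulAction G (Quotient φ) where
  smul σ := Quotient.map (σ • ·) (hφ σ)
  one_smul q := Quotient.inductionOn q fun x => congrArg (Quotient.mk φ) (one_smul G x)
  mul_smul σ τ q := Quotient.inductionOn q fun x => congrArg (Quotient.mk φ) (mul_smul σ τ x)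

variable [Finite α] {φ ψ : Setoid α} {g : G}

theorem pow_smul_rel_self_iff_card_quotient_dvd
    (hφ : ∀ (σ : G) (x y : α), φ.r x y → φ.r (σ • x) (σ • y))
    (hg : ∀ x y : α, ∃ n : ℤ, φ.r (g ^ n • x) y) (x : α) (n : ℕ) :
    φ.r (g ^ n • x) x ↔ Nat.card (Quotient φ) ∣ n := by
  let := quotientOfInvariant φ hφ
  have : IsPretransitive (zpowers g) (Quotient φ) := ⟨by
    rintro ⟨x⟩ ⟨y⟩
    obtain ⟨n, hn⟩ := hg x y
    exact ⟨⟨g ^ n, n, rfl⟩, Quotient.sound hn⟩⟩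
  exact Quotient.eq.symm.trans (pow_smul_eq_self_iff_card_dvd g (Quotient.mk φ x) n)

theorem card_orbit_zpowers_eq_lcm
    (hφ : ∀ (σ : G) (x y : α), φ.r x y → φ.r (σ • x) (σ • y))
    (hψ : ∀ (σ : G) (x y : α), ψ.r x y → ψ.r (σ • x) (σ • y)) (hmeet : φ ⊓ ψ = ⊥)
    (hgφ : ∀ x y : α, ∃ n : ℤ, φ.r (g ^ n • x) y) (hgψ : ∀ x y : α, ∃ n : ℤ, ψ.r (g ^ n • x) y)
    (x : α) :
    Nat.card (orbit (zpowers g) x) = Nat.lcm (Nat.card (Quotient φ)) (Nat.card (Quotient ψ)) :=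
  Nat.dvd_right_iff_eq.mp fun n => by
    rw [← pow_smul_eq_self_iff_card_orbit_zpowers_dvd, Nat.lcm_dvd_iff,
      ← pow_smul_rel_self_iff_card_quotient_dvd hφ hgφ,
      ← pow_smul_rel_self_iff_card_quotient_dvd hψ hgψ,
      ← Setoid.inf_iff_and, hmeet, Setoid.bot_def]

end MulAction

theorem Setoid.injective_quotient_mk_prod_of_inf_eq_bot {α : Type*} {φ ψ : Setoid α}
    (hmeet : φ ⊓ ψ = ⊥) :
    Function.Injective (fun x : α => (Quotient.mk φ x, Quotient.mk ψ x)) := fun x y hxy => by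
  have hrel : (φ ⊓ ψ) x y := Setoid.inf_iff_and.mpr
    ⟨Quotient.eq.mp (congrArg Prod.fst hxy), Quotient.eq.mp (congrArg Prod.snd hxy)⟩
  rwa [hmeet, Setoid.bot_def] at hrel

theorem Nat.two_le_gcd_of_two_mul_lcm_le {a b : ℕ} (hpos : 0 < Nat.lcm a b)
    (h : 2 * Nat.lcm a b ≤ a * b) :
    2 ≤ Nat.gcd a b ∧ (Nat.gcd a b = 2 ↔ 2 * Nat.lcm a b = a * b) := by
  rw [← Nat.gcd_mul_lcm a b] at h ⊢
  exact ⟨le_of_mul_le_mul_right h hpos, (Nat.mul_left_inj hpos.ne').symm.trans eq_comm⟩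

theorem stmt14_general {G Ω : Type*} [Group G] [MulAction G Ω] [Finite Ω]
    (g : G)
    (hg : Nat.card (Quotient (MulAction.orbitRel (Subgroup.zpowers g) Ω)) = 2)
    (φ ψ : Setoid Ω)
    (hφ : ∀ (σ : G) (x y : Ω), φ.r x y → φ.r (σ • x) (σ • y))
    (hψ : ∀ (σ : G) (x y : Ω), ψ.r x y → ψ.r (σ • x) (σ • y))
    (hmeet : φ ⊓ ψ = ⊥)
    (h1φ : ∀ x y : Ω, ∃ n : ℤ, φ.r (g ^ n • x) y)
    (h1ψ : ∀ x y : Ω, ∃ n : ℤ, ψ.r (g ^ n • x) y)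
    (a b : ℕ) (ha : a = Nat.card (Quotient φ)) (hb : b = Nat.card (Quotient ψ)) :
    2 ≤ Nat.gcd a b ∧
      (Nat.gcd a b = 2 ↔ Nat.card Ω = a * b) ∧
      (Nat.card Ω = a * b ↔
        Function.Bijective (fun x : Ω => (Quotient.mk φ x, Quotient.mk ψ x))) := by
  have : Nonempty Ω := by
    obtain ⟨⟨q⟩, -⟩ := Nat.card_pos_iff.mp (hg ▸ two_pos)
    exact ⟨q.out⟩
  have hcard : Nat.card Ω = 2 * Nat.lcm a b := by
    rw [card_eq_card_orbitRel_quotient_mul (card_orbit_zpowers_eq_lcm hφ hψ hmeet h1φ h1ψ), ← ha,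
      ← hb]
    exact congrArg (· * _) hg
  have hinj := Setoid.injective_quotient_mk_prod_of_inf_eq_bot hmeet
  have hprod : Nat.card (Quotient φ × Quotient ψ) = a * b := by rw [Nat.card_prod, ha, hb]
  obtain ⟨hgcd, hgcd_iff⟩ := Nat.two_le_gcd_of_two_mul_lcm_le
    (by have := hcard ▸ Nat.card_pos (α := Ω); omega)
    (hcard ▸ hprod ▸ Nat.card_le_card_of_injective _ hinj)
  refine ⟨hgcd, hcard ▸ hgcd_iff, ?_⟩
  rw [Nat.bijective_iff_injective_and_card, hprod]
  exact (and_iff_right hinj).symm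

/-- Case 4: `g` has two orbits on the finite transitive `G`-set `Ω`; `φ, ψ` are
congruences with trivial meet on which `g` acts as a single cycle (of lengths
`a` and `b`).  Then `gcd(a,b) ≥ 2`, with equality iff `|Ω| = ab`, i.e. iff
`Ω ≅ Ω/φ × Ω/ψ`. -/
theorem stmt14 {G Ω : Type*} [Group G] [MulAction G Ω] [Finite Ω]
    [MulAction.IsPretransitive G Ω] (g : G)
    (hg : Nat.card (Quotient (MulAction.orbitRel (Subgroup.zpowers g) Ω)) = 2)
    (φ ψ : Setoid Ω)
    (hφ : ∀ (σ : G) (x y : Ω), φ.r x y → φ.r (σ • x) (σ • y))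
    (hψ : ∀ (σ : G) (x y : Ω), ψ.r x y → ψ.r (σ • x) (σ • y))
    (hmeet : φ ⊓ ψ = ⊥)
    (h1φ : ∀ x y : Ω, ∃ n : ℤ, φ.r (g ^ n • x) y)
    (h1ψ : ∀ x y : Ω, ∃ n : ℤ, ψ.r (g ^ n • x) y)
    (a b : ℕ) (ha : a = Nat.card (Quotient φ)) (hb : b = Nat.card (Quotient ψ)) :
    2 ≤ Nat.gcd a b ∧
      (Nat.gcd a b = 2 ↔ Nat.card Ω = a * b) ∧
      (Nat.card Ω = a * b ↔
        Function.Bijective (fun x : Ω => (Quotient.mk φ x, Quotient.mk ψ x))) :=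
  stmt14_general g hg φ ψ hφ hψ hmeet h1φ h1ψ a b ha hb
end

section
/- Let G be the group of permutations of F₉ (the field with 9 elements) of the form x ↦ αx + β with β ∈ F₉ and α⁴ = 1, and let H = {x ↦ ±x}. Then the pair (G, H) does not have the Jordan property: there exist maximal chains of subgroups between H and G of different lengths (e.g. H < {x ↦ αx : α⁴=1} < G has length 2, while H < {x ↦ ±x+β : β ∈ F₃} < {x ↦ ±x+β : β ∈ F₉} < G has length 3), even though G contains an abelian subgroup (the translations {x ↦ x+β}) having exactly two orbits on G/H. -/
/-!
Let `i² = -1` in `F` (it exists as `9 ≢ 3 mod 4`). In the chain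
`H < {x ↦ ±x + β : β ∈ F₃} < {x ↦ ±x + β} < G` every index is prime (`3, 3, 2`), so every step
is a cover. In `H < K < G` with `K = {x ↦ αx : α⁴ = 1}` the first index is `2`; a subgroup
between `K` and `G` is `K` together with the translations by an additive subgroup `B ≤ F`
stable under multiplication by `i`, and if `0 ≠ b ∈ B` then `0, b, -b, ib` are four distinct
elements of `B`, so `|B| = 9` by Lagrange. Finally `G = T·H ∪ T·(x ↦ ix)·H`.
-/

open Pointwise

lemma Subgroup.covBy_of_card_eq_prime_mul {G : Type*} [Group G] [Finite G] {H K : Subgroup G}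
    {p : ℕ} (hp : p.Prime) (hHK : H ≤ K) (hcard : Nat.card K = p * Nat.card H) : H ⋖ K := by
  have hrel : H.relIndex K = p := by
    have h := Subgroup.relIndex_mul_relIndex ⊥ H K bot_le hHK
    rw [Subgroup.relIndex_bot_left, Subgroup.relIndex_bot_left, hcard, mul_comm] at h
    exact Nat.eq_of_mul_eq_mul_right Nat.card_pos h
  refine ⟨lt_of_le_of_ne hHK fun h => ?_, fun C hHC hCK => ?_⟩
  · rw [h, Subgroup.relIndex_self] at hrel
    exact hp.ne_one hrel.symm
  · rw [← hrel, ← Subgroup.relIndex_mul_relIndex H C K hHC.le hCK.le] at hp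
    rcases Nat.prime_mul_iff.mp hp with ⟨-, h⟩ | ⟨-, h⟩
    · exact hCK.not_ge (Subgroup.relIndex_eq_one.mp h)
    · exact hHC.not_ge (Subgroup.relIndex_eq_one.mp h)

section Affine

variable {F : Type*} [Field F]

def affinePerm (α : Fˣ) (β : F) : Equiv.Perm F :=
  (Units.mulLeft α).trans (Equiv.addRight β)

@[simp]
lemma affinePerm_apply (α : Fˣ) (β x : F) : affinePerm α β x = α * x + β := rfl

lemma affinePerm_mul (α α' : Fˣ) (β β' : F) :
    affinePerm α β * affinePerm α' β' = affinePerm (α * α') (α * β' + β) := by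
  ext x
  simp only [Equiv.Perm.mul_apply, affinePerm_apply, Units.val_mul]
  ring

@[simp]
lemma affinePerm_one_zero : affinePerm (1 : Fˣ) (0 : F) = 1 := by
  ext x
  simp

lemma affinePerm_inv (α : Fˣ) (β : F) : (affinePerm α β)⁻¹ = affinePerm α⁻¹ (-(α⁻¹ * β)) := by
  rw [inv_eq_iff_mul_eq_one, affinePerm_mul]
  simp

lemma affinePerm_inj {α α' : Fˣ} {β β' : F} :
    affinePerm α β = affinePerm α' β' ↔ α = α' ∧ β = β' := by
  refine ⟨fun h => ?_, fun ⟨rfl, rfl⟩ => rfl⟩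
  have h0 := congrArg (· 0) h
  have h1 := congrArg (· 1) h
  simp only [affinePerm_apply, mul_zero, zero_add, mul_one] at h0 h1
  subst h0
  exact ⟨Units.ext (add_right_cancel h1), rfl⟩

lemma affinePerm_eq_iff {σ : Equiv.Perm F} {α : Fˣ} {β : F} :
    σ = affinePerm α β ↔ ∀ x, σ x = α * x + β :=
  Equiv.ext_iff

variable {M M' : Subgroup Fˣ} {B B' : AddSubgroup F}

def affineSubgroup (M : Subgroup Fˣ) (B : AddSubgroup F)
    (hMB : ∀ α ∈ M, ∀ β ∈ B, (α : F) * β ∈ B) : Subgroup (Equiv.Perm F) where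
  carrier := {σ | ∃ α ∈ M, ∃ β ∈ B, σ = affinePerm α β}
  one_mem' := ⟨1, M.one_mem, 0, B.zero_mem, affinePerm_one_zero.symm⟩
  mul_mem' := by
    rintro _ _ ⟨α, hα, β, hβ, rfl⟩ ⟨α', hα', β', hβ', rfl⟩
    exact ⟨_, M.mul_mem hα hα', _, B.add_mem (hMB α hα β' hβ') hβ, affinePerm_mul ..⟩
  inv_mem' := by
    rintro _ ⟨α, hα, β, hβ, rfl⟩
    exact ⟨_, M.inv_mem hα, _, B.neg_mem (hMB _ (M.inv_mem hα) β hβ), affinePerm_inv α β⟩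

variable {hMB : ∀ α ∈ M, ∀ β ∈ B, (α : F) * β ∈ B} {hMB' : ∀ α ∈ M', ∀ β ∈ B', (α : F) * β ∈ B'}

lemma mem_affineSubgroup {σ : Equiv.Perm F} :
    σ ∈ affineSubgroup M B hMB ↔ ∃ α ∈ M, ∃ β ∈ B, σ = affinePerm α β :=
  Iff.rfl

lemma affinePerm_mem_affineSubgroup {α : Fˣ} {β : F} (hα : α ∈ M) (hβ : β ∈ B) :
    affinePerm α β ∈ affineSubgroup M B hMB :=
  ⟨α, hα, β, hβ, rfl⟩

lemma coe_affineSubgroup :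
    (affineSubgroup M B hMB : Set (Equiv.Perm F)) =
      {σ | ∃ α ∈ M, ∃ β ∈ B, ∀ x, σ x = α * x + β} := by
  ext σ
  simp only [SetLike.mem_coe, mem_affineSubgroup, affinePerm_eq_iff, Set.mem_ofPred_eq]

lemma affineSubgroup_mono (hM : M ≤ M') (hB : B ≤ B') :
    affineSubgroup M B hMB ≤ affineSubgroup M' B' hMB' := by
  rintro _ ⟨α, hα, β, hβ, rfl⟩
  exact ⟨α, hM hα, β, hB hβ, rfl⟩

lemma card_affineSubgroup : Nat.card (affineSubgroup M B hMB) = Nat.card M * Nat.card B := by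
  rw [← Nat.card_prod]
  refine (Nat.card_congr (Equiv.ofBijective
    (fun p : M × B => (⟨affinePerm p.1 p.2, affinePerm_mem_affineSubgroup p.1.2 p.2.2⟩ :
      affineSubgroup M B hMB)) ⟨?_, ?_⟩)).symm
  · rintro ⟨⟨α, _⟩, ⟨β, _⟩⟩ ⟨⟨α', _⟩, ⟨β', _⟩⟩ h
    obtain ⟨rfl, rfl⟩ := affinePerm_inj.mp (congrArg Subtype.val h)
    rfl
  · rintro ⟨_, α, hα, β, hβ, rfl⟩
    exact ⟨(⟨α, hα⟩, ⟨β, hβ⟩), rfl⟩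

lemma affineSubgroup_bot_mul_comm {σ τ : Equiv.Perm F}
    {hB : ∀ α ∈ (⊥ : Subgroup Fˣ), ∀ β ∈ B, (α : F) * β ∈ B}
    (hσ : σ ∈ affineSubgroup ⊥ B hB) (hτ : τ ∈ affineSubgroup ⊥ B hB) : σ * τ = τ * σ := by
  obtain ⟨α, hα, β, -, rfl⟩ := hσ
  obtain ⟨α', hα', β', -, rfl⟩ := hτ
  rw [Subgroup.mem_bot] at hα hα'
  subst hα hα'
  simp only [affinePerm_mul, mul_one, Units.val_one, one_mul, add_comm]

def translationSubgroup (C : Subgroup (Equiv.Perm F)) : AddSubgroup F where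
  carrier := {β | affinePerm 1 β ∈ C}
  zero_mem' := by simp [C.one_mem]
  add_mem' {a b} ha hb := by
    simpa [affinePerm_mul, add_comm] using C.mul_mem ha hb
  neg_mem' {a} ha := by simpa [affinePerm_inv] using C.inv_mem ha

lemma mem_translationSubgroup {C : Subgroup (Equiv.Perm F)} {β : F} :
    β ∈ translationSubgroup C ↔ affinePerm 1 β ∈ C :=
  Iff.rfl

lemma mul_mem_translationSubgroup {C : Subgroup (Equiv.Perm F)}
    (hC : affineSubgroup M ⊥ (by simp) ≤ C) :
    ∀ α ∈ M, ∀ β ∈ translationSubgroup C, (α : F) * β ∈ translationSubgroup C := by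
  intro α hα β hβ
  have hα₀ : affinePerm α 0 ∈ C := hC (affinePerm_mem_affineSubgroup hα (zero_mem _))
  have hconj : affinePerm 1 (α * β) = affinePerm α 0 * affinePerm 1 β * (affinePerm α 0)⁻¹ := by
    simp [affinePerm_inv, affinePerm_mul]
  rw [mem_translationSubgroup, hconj]
  exact C.mul_mem (C.mul_mem hα₀ hβ) (C.inv_mem hα₀)

lemma eq_affineSubgroup_of_translationSubgroup_eq {C : Subgroup (Equiv.Perm F)}
    (hKC : affineSubgroup M ⊥ (by simp) ≤ C) (hCG : C ≤ affineSubgroup M ⊤ (by simp))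
    (hB : translationSubgroup C = B) : C = affineSubgroup M B hMB := by
  subst hB
  refine le_antisymm (fun σ hσ => ?_) ?_
  · obtain ⟨α, hα, β, -, rfl⟩ := hCG hσ
    have hα₀ : affinePerm α 0 ∈ C := hKC (affinePerm_mem_affineSubgroup hα (zero_mem _))
    refine affinePerm_mem_affineSubgroup hα ?_
    have : affinePerm 1 β = affinePerm α β * (affinePerm α 0)⁻¹ := by
      simp [affinePerm_inv, affinePerm_mul]
    rw [mem_translationSubgroup, this]
    exact C.mul_mem hσ (C.inv_mem hα₀)
  · rintro _ ⟨α, hα, β, hβ, rfl⟩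
    have : affinePerm α β = affinePerm 1 β * affinePerm α 0 := by simp [affinePerm_mul]
    rw [this]
    exact C.mul_mem hβ (hKC (affinePerm_mem_affineSubgroup hα (zero_mem _)))

-- `hM` says that `F` is a simple `M`-module.
lemma affineSubgroup_bot_covBy_top
    (hM : ∀ B : AddSubgroup F, (∀ α ∈ M, ∀ β ∈ B, (α : F) * β ∈ B) → B = ⊥ ∨ B = ⊤) :
    affineSubgroup M ⊥ (by simp) ⋖ affineSubgroup M ⊤ (by simp) := by
  refine ⟨lt_of_le_of_ne (affineSubgroup_mono le_rfl bot_le) fun h => ?_, fun C hKC hCG => ?_⟩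
  · have h₁ : affinePerm 1 1 ∈ affineSubgroup M ⊤ (by simp) :=
      affinePerm_mem_affineSubgroup M.one_mem (AddSubgroup.mem_top 1)
    obtain ⟨α, -, β, hβ, hαβ⟩ := h ▸ h₁
    rw [affinePerm_inj, AddSubgroup.mem_bot.mp hβ] at hαβ
    exact one_ne_zero hαβ.2
  · rcases hM _ (mul_mem_translationSubgroup hKC.le) with h | h
    · exact hKC.ne' (eq_affineSubgroup_of_translationSubgroup_eq hKC.le hCG.le h)
    · exact hCG.ne (eq_affineSubgroup_of_translationSubgroup_eq hKC.le hCG.le h)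

lemma affineSubgroup_covBy [Finite F] {p : ℕ} (hp : p.Prime) (hM : M ≤ M') (hB : B ≤ B')
    (hcard : Nat.card M' * Nat.card B' = p * (Nat.card M * Nat.card B)) :
    affineSubgroup M B hMB ⋖ affineSubgroup M' B' hMB' :=
  Subgroup.covBy_of_card_eq_prime_mul hp (affineSubgroup_mono hM hB)
    (by rw [card_affineSubgroup, card_affineSubgroup, hcard])

end Affine

section RootsOfUnity

variable {F : Type*} [Field F]

lemma card_rootsOfUnity_two (h : (-1 : F) ≠ 1) : Nat.card (rootsOfUnity 2 F) = 2 :=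
  (IsPrimitiveRoot.iff_orderOf.mpr (orderOf_eq_prime (neg_one_sq) h)).card_rootsOfUnity

lemma card_rootsOfUnity_four {i : F} (hi : i ^ 2 = -1) (h : (-1 : F) ≠ 1) :
    Nat.card (rootsOfUnity 4 F) = 4 :=
  (IsPrimitiveRoot.iff_orderOf.mpr (orderOf_eq_prime_pow (p := 2) (n := 1) (by rwa [pow_one, hi])
    (by rw [show 2 ^ (1 + 1) = 2 * 2 by rfl, pow_mul, hi, neg_one_sq]))).card_rootsOfUnity

lemma card_zmultiples_one (p : ℕ) [CharP F p] : Nat.card (AddSubgroup.zmultiples (1 : F)) = p := by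
  rw [Nat.card_zmultiples, CharP.eq F (CharP.addOrderOf_one F) ‹_›]

lemma mul_mem_zmultiples_one {α : Fˣ} (hα : α ∈ rootsOfUnity 2 F) {β : F}
    (hβ : β ∈ AddSubgroup.zmultiples (1 : F)) : (α : F) * β ∈ AddSubgroup.zmultiples (1 : F) := by
  rcases sq_eq_one_iff.mp ((mem_rootsOfUnity' 2 α).mp hα) with h | h <;> rw [h]
  · rwa [one_mul]
  · rw [neg_one_mul]
    exact neg_mem hβ

lemma exists_mem_rootsOfUnity_iff {n : ℕ} (hn : n ≠ 0) {P : F → Prop} :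
    (∃ α ∈ rootsOfUnity n F, P α) ↔ ∃ α : F, α ^ n = 1 ∧ P α := by
  refine ⟨fun ⟨α, hα, h⟩ => ⟨α, (mem_rootsOfUnity' n α).mp hα, h⟩, fun ⟨α, hα, h⟩ => ?_⟩
  exact ⟨(IsUnit.of_pow_eq_one hα hn).unit, (mem_rootsOfUnity' n _).mpr hα, h⟩

lemma coe_affineSubgroup_rootsOfUnity_top {n : ℕ} (hn : n ≠ 0) :
    (affineSubgroup (rootsOfUnity n F) ⊤ (by simp) : Set (Equiv.Perm F)) =
      {σ | ∃ α β : F, α ^ n = 1 ∧ ∀ x, σ x = α * x + β} := by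
  ext σ
  simp only [coe_affineSubgroup, AddSubgroup.mem_top, true_and, Set.mem_ofPred_eq,
    exists_and_left]
  exact exists_mem_rootsOfUnity_iff (P := fun α => ∃ β, ∀ x, σ x = α * x + β) hn

lemma coe_affineSubgroup_rootsOfUnity_bot {n : ℕ} (hn : n ≠ 0) :
    (affineSubgroup (rootsOfUnity n F) ⊥ (by simp) : Set (Equiv.Perm F)) =
      {σ | ∃ α : F, α ^ n = 1 ∧ ∀ x, σ x = α * x} := by
  ext σ
  simp only [coe_affineSubgroup, AddSubgroup.mem_bot, exists_eq_left, add_zero, Set.mem_ofPred_eq]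
  exact exists_mem_rootsOfUnity_iff (P := fun α => ∀ x, σ x = α * x) hn

lemma coe_affineSubgroup_bot_top :
    (affineSubgroup (F := F) ⊥ ⊤ (by simp) : Set (Equiv.Perm F)) =
      {σ | ∃ β : F, ∀ x, σ x = x + β} := by
  ext σ
  simp only [coe_affineSubgroup, Subgroup.mem_bot, exists_eq_left, AddSubgroup.mem_top, true_and,
    Units.val_one, one_mul, Set.mem_ofPred_eq]

lemma mem_rootsOfUnity_four_of_sq_eq_neg_one {ι : Fˣ} (hι : (ι : F) ^ 2 = -1) :
    ι ∈ rootsOfUnity 4 F := by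
  rw [mem_rootsOfUnity', show 4 = 2 * 2 by rfl, pow_mul, hι, neg_one_sq]

end RootsOfUnity

section DoubleCosets

variable {F : Type*} [Field F]

lemma mem_translations_mul_affinePerm_mul {M : Subgroup Fˣ}
    {hT : ∀ α ∈ (⊥ : Subgroup Fˣ), ∀ β ∈ (⊤ : AddSubgroup F), (α : F) * β ∈ (⊤ : AddSubgroup F)}
    {hM : ∀ α ∈ M, ∀ β ∈ (⊥ : AddSubgroup F), (α : F) * β ∈ (⊥ : AddSubgroup F)}
    {γ : Fˣ} {σ : Equiv.Perm F} :
    σ ∈ (affineSubgroup ⊥ ⊤ hT : Set (Equiv.Perm F)) * {affinePerm γ 0} *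
        (affineSubgroup M ⊥ hM : Set (Equiv.Perm F)) ↔
      ∃ α ∈ M, ∃ β : F, σ = affinePerm (γ * α) β := by
  refine DoubleCoset.mem_doubleCoset.trans ⟨?_, ?_⟩
  · rintro ⟨_, ⟨a, ha, b, -, rfl⟩, _, ⟨α, hα, c, hc, rfl⟩, rfl⟩
    rw [Subgroup.mem_bot] at ha
    rw [AddSubgroup.mem_bot] at hc
    subst ha hc
    exact ⟨α, hα, b, by simp [affinePerm_mul]⟩
  · rintro ⟨α, hα, β, rfl⟩
    exact ⟨affinePerm 1 β, affinePerm_mem_affineSubgroup (one_mem _) (AddSubgroup.mem_top β),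
      affinePerm α 0, affinePerm_mem_affineSubgroup hα (zero_mem _), by simp [affinePerm_mul]⟩

variable {ι : Fˣ}

lemma affinePerm_notMem_translations_mul_one_mul (hι : (ι : F) ^ 2 = -1) (h : (-1 : F) ≠ 1) :
    affinePerm ι 0 ∉ (affineSubgroup (F := F) ⊥ ⊤ (by simp) : Set (Equiv.Perm F)) *
      {affinePerm 1 0} * (affineSubgroup (rootsOfUnity 2 F) ⊥ (by simp) : Set (Equiv.Perm F)) := by
  rw [mem_translations_mul_affinePerm_mul]
  rintro ⟨α, hα, β, hια⟩
  rw [one_mul, affinePerm_inj] at hια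
  rw [← hια.1, mem_rootsOfUnity', hι] at hα
  exact h hα

lemma translations_mul_union_eq (hι : (ι : F) ^ 2 = -1) :
    (affineSubgroup (F := F) ⊥ ⊤ (by simp) : Set (Equiv.Perm F)) * {affinePerm 1 0} *
        (affineSubgroup (rootsOfUnity 2 F) ⊥ (by simp) : Set (Equiv.Perm F)) ∪
      (affineSubgroup (F := F) ⊥ ⊤ (by simp) : Set (Equiv.Perm F)) * {affinePerm ι 0} *
        (affineSubgroup (rootsOfUnity 2 F) ⊥ (by simp) : Set (Equiv.Perm F)) =
      affineSubgroup (rootsOfUnity 4 F) ⊤ (by simp) := by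
  have hμ : rootsOfUnity 2 F ≤ rootsOfUnity 4 F := rootsOfUnity_le_of_dvd (by norm_num)
  have hι₄ := mem_rootsOfUnity_four_of_sq_eq_neg_one hι
  ext σ
  simp only [Set.mem_union, mem_translations_mul_affinePerm_mul, SetLike.mem_coe,
    mem_affineSubgroup, AddSubgroup.mem_top, true_and, one_mul]
  constructor
  · rintro (⟨α, hα, β, rfl⟩ | ⟨α, hα, β, rfl⟩)
    · exact ⟨α, hμ hα, β, rfl⟩
    · exact ⟨ι * α, mul_mem hι₄ (hμ hα), β, rfl⟩
  · rintro ⟨α, hα, β, rfl⟩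
    rw [mem_rootsOfUnity', show 4 = 2 * 2 by rfl, pow_mul, sq_eq_one_iff] at hα
    rcases hα with hα | hα
    · exact Or.inl ⟨α, (mem_rootsOfUnity' 2 α).mpr hα, β, rfl⟩
    · refine Or.inr ⟨ι⁻¹ * α, (mem_rootsOfUnity' 2 _).mpr ?_, β, by rw [mul_inv_cancel_left]⟩
      rw [Units.val_mul, mul_pow, Units.val_inv_eq_inv_val, inv_pow, hι, hα]
      norm_num

end DoubleCosets

section NineElements

variable {F : Type*} [Field F] [Fintype F]

lemma charP_three_of_card_eq_nine (hF : Fintype.card F = 9) : CharP F 3 := by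
  obtain ⟨n, hp, hn⟩ := FiniteField.card F (ringChar F)
  have hdvd : ringChar F ∣ 3 ^ 2 := ⟨ringChar F ^ ((n : ℕ) - 1), by
    rw [← pow_succ', Nat.sub_add_cancel n.pos, ← hn, hF]; rfl⟩
  exact ringChar.eq_iff.mp ((Nat.prime_dvd_prime_iff_eq hp Nat.prime_three).mp
    (hp.dvd_of_dvd_pow hdvd))

lemma neg_one_ne_one_of_card_eq_nine (hF : Fintype.card F = 9) : (-1 : F) ≠ 1 :=
  have := charP_three_of_card_eq_nine hF
  Ring.neg_one_ne_one_of_char_ne_two (by rw [ringChar.eq F 3]; decide)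

lemma exists_units_sq_eq_neg_one_of_card_eq_nine (hF : Fintype.card F = 9) :
    ∃ ι : Fˣ, (ι : F) ^ 2 = -1 := by
  obtain ⟨i, hi⟩ := FiniteField.isSquare_neg_one_iff.mpr (by rw [hF]; decide)
  have hi₀ : i ≠ 0 := by
    rintro rfl
    simp at hi
  exact ⟨Units.mk0 i hi₀, by rw [Units.val_mk0, sq, hi]⟩

lemma AddSubgroup.eq_bot_or_eq_top_of_mul_mem_of_card_eq_nine (hF : Fintype.card F = 9) {i : F}
    (hi : i ^ 2 = -1) (B : AddSubgroup F) (hB : ∀ β ∈ B, i * β ∈ B) : B = ⊥ ∨ B = ⊤ := by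
  refine B.bot_or_exists_ne_zero.imp_right fun ⟨b, hb, hb0⟩ => ?_
  have := charP_three_of_card_eq_nine hF
  have h3 : (3 : F) = 0 := CharP.cast_eq_zero F 3
  have hi₁ : i - 1 ≠ 0 := fun h => one_ne_zero (by linear_combination h3 - hi + (i + 1) * h)
  have hi₂ : i + 1 ≠ 0 := fun h => one_ne_zero (by linear_combination h3 - hi + (i - 1) * h)
  have hi₀ : i ≠ 0 := fun h => one_ne_zero (by linear_combination hi - i * h)
  have h₂ : (2 : F) ≠ 0 := fun h => one_ne_zero (by linear_combination h3 - h)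
  have hsub : ({0, b, -b, i * b} : Set F) ⊆ B := by
    simp only [Set.insert_subset_iff, Set.singleton_subset_iff, SetLike.mem_coe]
    exact ⟨B.zero_mem, hb, B.neg_mem hb, hB b hb⟩
  have hfour : ({0, b, -b, i * b} : Set F).ncard = 4 := by
    rw [Set.ncard_insert_of_notMem, Set.ncard_insert_of_notMem, Set.ncard_pair]
    · exact fun h => mul_ne_zero hi₂ hb0 (by linear_combination -h)
    · simp only [Set.mem_insert_iff, Set.mem_singleton_iff, not_or]
      exact ⟨fun h => mul_ne_zero h₂ hb0 (by linear_combination h),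
        fun h => mul_ne_zero hi₁ hb0 (by linear_combination -h)⟩
    · simp only [Set.mem_insert_iff, Set.mem_singleton_iff, not_or]
      exact ⟨fun h => hb0 h.symm, fun h => hb0 (neg_eq_zero.mp h.symm),
        fun h => mul_ne_zero hi₀ hb0 h.symm⟩
  have hle : 4 ≤ Nat.card B := by
    rw [← hfour, ← SetLike.coe_sort_coe, Nat.card_coe_set_eq]
    exact Set.ncard_le_ncard hsub
  have hdvd : Nat.card B ∣ 9 :=
    hF ▸ Fintype.card_eq_nat_card (α := F) ▸ B.card_addSubgroup_dvd_card
  have h9 : Nat.card B = 9 := by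
    have := Nat.le_of_dvd (by norm_num) hdvd
    interval_cases h : Nat.card B <;> simp_all
  exact AddSubgroup.eq_top_of_card_eq B (by rw [h9, ← Fintype.card_eq_nat_card, hF])

lemma isChain_covBy_affineSubgroup (hF : Fintype.card F = 9) :
    [affineSubgroup (rootsOfUnity 2 F) ⊥ (by simp), affineSubgroup (rootsOfUnity 4 F) ⊥ (by simp),
        affineSubgroup (rootsOfUnity 4 F) ⊤ (by simp)].IsChain (· ⋖ ·) ∧
      [affineSubgroup (rootsOfUnity 2 F) ⊥ (by simp),
        affineSubgroup (rootsOfUnity 2 F) (AddSubgroup.zmultiples 1)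
          (fun _ hα _ => mul_mem_zmultiples_one hα),
        affineSubgroup (rootsOfUnity 2 F) ⊤ (by simp),
        affineSubgroup (rootsOfUnity 4 F) ⊤ (by simp)].IsChain (· ⋖ ·) := by
  have := charP_three_of_card_eq_nine hF
  have hneg := neg_one_ne_one_of_card_eq_nine hF
  obtain ⟨ι, hι⟩ := exists_units_sq_eq_neg_one_of_card_eq_nine hF
  have hμ : rootsOfUnity 2 F ≤ rootsOfUnity 4 F := rootsOfUnity_le_of_dvd (by norm_num)
  have hμ₂ := card_rootsOfUnity_two hneg
  have hμ₄ := card_rootsOfUnity_four hι hneg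
  have hF₃ := card_zmultiples_one (F := F) 3
  have hF₉ : Nat.card (⊤ : AddSubgroup F) = 9 := by
    rw [AddSubgroup.card_top, Nat.card_eq_fintype_card, hF]
  refine ⟨List.isChain_cons_cons.mpr ⟨?_, List.isChain_pair.mpr ?_⟩,
    List.isChain_cons_cons.mpr ⟨?_, List.isChain_cons_cons.mpr ⟨?_, List.isChain_pair.mpr ?_⟩⟩⟩
  · exact affineSubgroup_covBy Nat.prime_two hμ le_rfl (by rw [hμ₂, hμ₄, AddSubgroup.card_bot])
  · exact affineSubgroup_bot_covBy_top fun B hB =>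
      B.eq_bot_or_eq_top_of_mul_mem_of_card_eq_nine hF hι
        (hB ι (mem_rootsOfUnity_four_of_sq_eq_neg_one hι))
  · exact affineSubgroup_covBy Nat.prime_three le_rfl bot_le
      (by rw [hμ₂, hF₃, AddSubgroup.card_bot])
  · exact affineSubgroup_covBy Nat.prime_three le_rfl le_top (by rw [hμ₂, hF₃, hF₉])
  · exact affineSubgroup_covBy Nat.prime_two hμ le_rfl (by rw [hμ₂, hμ₄, hF₉])

end NineElements

/-- Counterexample: `F` a field with 9 elements, `G = {x ↦ αx + β : α⁴ = 1}`,
`H = {x ↦ ±x}`.  Then there exist maximal chains between `H` and `G` of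
lengths `3` and `4` (so `(G,H)` fails the Jordan property), even though the
abelian subgroup `T = {x ↦ x + β}` of `G` has exactly two orbits on `G/H`. -/
theorem stmt17 {F : Type*} [Field F] [Fintype F] (hF : Fintype.card F = 9)
    (G H : Subgroup (Equiv.Perm F))
    (hG : (G : Set (Equiv.Perm F))
      = {σ | ∃ α β : F, α ^ 4 = 1 ∧ ∀ x, σ x = α * x + β})
    (hH : (H : Set (Equiv.Perm F)) = {σ | ∃ α : F, α ^ 2 = 1 ∧ ∀ x, σ x = α * x}) :
    (∃ c d : List (Subgroup (Equiv.Perm F)),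
      (c.Chain' (· ⋖ ·) ∧ c.head? = some H ∧ c.getLast? = some G) ∧
      (d.Chain' (· ⋖ ·) ∧ d.head? = some H ∧ d.getLast? = some G) ∧
      c.length = 3 ∧ d.length = 4) ∧
    ∃ T : Subgroup (Equiv.Perm F), T ≤ G ∧
      (T : Set (Equiv.Perm F)) = {σ | ∃ β : F, ∀ x, σ x = x + β} ∧
      (∀ σ₁ σ₂, σ₁ ∈ T → σ₂ ∈ T → σ₁ * σ₂ = σ₂ * σ₁) ∧
      ∃ σ₁ σ₂, σ₁ ∈ G ∧ σ₂ ∈ G ∧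
        σ₂ ∉ (T : Set (Equiv.Perm F)) * {σ₁} * (H : Set (Equiv.Perm F)) ∧
        (T : Set (Equiv.Perm F)) * {σ₁} * (H : Set (Equiv.Perm F)) ∪
          (T : Set (Equiv.Perm F)) * {σ₂} * (H : Set (Equiv.Perm F))
          = (G : Set (Equiv.Perm F)) := by
  obtain ⟨ι, hι⟩ := exists_units_sq_eq_neg_one_of_card_eq_nine hF
  have hG' : G = affineSubgroup (rootsOfUnity 4 F) ⊤ (by simp) :=
    SetLike.coe_injective (hG.trans (coe_affineSubgroup_rootsOfUnity_top (by norm_num)).symm)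
  have hH' : H = affineSubgroup (rootsOfUnity 2 F) ⊥ (by simp) :=
    SetLike.coe_injective (hH.trans (coe_affineSubgroup_rootsOfUnity_bot (by norm_num)).symm)
  subst hG' hH'
  obtain ⟨hc, hd⟩ := isChain_covBy_affineSubgroup hF
  exact ⟨⟨_, _, ⟨hc, rfl, rfl⟩, ⟨hd, rfl, rfl⟩, rfl, rfl⟩,
    affineSubgroup ⊥ ⊤ (by simp), affineSubgroup_mono bot_le le_rfl, coe_affineSubgroup_bot_top,
    fun _ _ => affineSubgroup_bot_mul_comm, affinePerm 1 0, affinePerm ι 0,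
    affinePerm_mem_affineSubgroup (one_mem _) trivial,
    affinePerm_mem_affineSubgroup (mem_rootsOfUnity_four_of_sq_eq_neg_one hι) trivial,
    affinePerm_notMem_translations_mul_one_mul hι (neg_one_ne_one_of_card_eq_nine hF),
    translations_mul_union_eq hι⟩
end
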